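/- Let E be a real normed vector space and let e₁, e₂, e₃ be smooth sections of the generalized tangent bundle of E. Suppose that Θ(e_i, e_j) vanishes identically for all i, j ∈ {1,2,3} and that Θ(⟦e_i, e_j⟧, e_k) vanishes identically for all i, j, k ∈ {1,2,3}. Then the Courant bracket satisfies the Jacobi identity on this triple: ⟦⟦e₁,e₂⟧, e₃⟧ + ⟦⟦e₂,e₃⟧, e₁⟧ + ⟦⟦e₃,e₁⟧, e₂⟧ = 0. In particular, the restriction of the Courant bracket to sections of a Dirac structure (an isotropic subbundle closed under the bracket) yields a Lie bracket. -/

import Mathlib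

/-!
STATEMENT 7: On the generalized tangent bundle of a real normed space E, if the pairings
Θ(eᵢ,eⱼ) and Θ(⟦eᵢ,eⱼ⟧,e_k) vanish identically on a triple of smooth sections (as happens
for sections of a Dirac structure), then the Courant bracket satisfies the Jacobi identity
⟦⟦e₁,e₂⟧,e₃⟧ + ⟦⟦e₂,e₃⟧,e₁⟧ + ⟦⟦e₃,e₁⟧,e₂⟧ = 0 on that triple.
-/

variable {E : Type*} [NormedAddCommGroup E] [NormedSpace ℝ E]

/-- Lie bracket of vector fields: `[X,Y](x) = DY(x)(X(x)) − DX(x)(Y(x))`. -/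
noncomputable def vecBracket (X Y : E → E) : E → E :=
  fun x => fderiv ℝ Y x (X x) - fderiv ℝ X x (Y x)

/-- Lie derivative of a 1-form along a vector field:
`(L_X β)(x)(v) = (Dβ(x)(X(x)))(v) + β(x)(DX(x)(v))`. -/
noncomputable def lieDeriv (X : E → E) (β : E → (E →L[ℝ] ℝ)) : E → (E →L[ℝ] ℝ) :=
  fun x => fderiv ℝ β x (X x) + (β x).comp (fderiv ℝ X x)

/-- The Courant bracket
`⟦e₁,e₂⟧ = ([X₁,X₂], L_{X₁}α₂ − L_{X₂}α₁ + (1/2) d(ι_{X₂}α₁ − ι_{X₁}α₂))`. -/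
noncomputable def courant (e₁ e₂ : (E → E) × (E → (E →L[ℝ] ℝ))) :
    (E → E) × (E → (E →L[ℝ] ℝ)) :=
  (vecBracket e₁.1 e₂.1,
    fun x => lieDeriv e₁.1 e₂.2 x - lieDeriv e₂.1 e₁.2 x +
      (1 / 2 : ℝ) • fderiv ℝ (fun y => e₁.2 y (e₂.1 y) - e₂.2 y (e₁.1 y)) x)

/-- The pairing `Θ(e₁,e₂)(x) = α₁(x)(X₂(x)) + α₂(x)(X₁(x))`. -/
def pairingTheta (e₁ e₂ : (E → E) × (E → (E →L[ℝ] ℝ))) : E → ℝ :=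
  fun x => e₁.2 x (e₂.1 x) + e₂.2 x (e₁.1 x)

/-!
Replace the Courant bracket by the Dorfman bracket `e₁ ∘ e₂ = ([X₁,X₂], L_{X₁}α₂ − ι_{X₂}dα₁)`,
which differs from it by `(1/2) dΘ(e₁,e₂)`. The Dorfman bracket satisfies the Leibniz identity
`a ∘ (b ∘ c) = (a ∘ b) ∘ c + b ∘ (a ∘ c)` for all sections; on forms this is a combination of the
Cartan identities `L_{[X,Y]} = [L_X, L_Y]` and `ι_{[X,Z]} d = [L_X, ι_Z d]` together with `d² = 0`,
each of which reduces to the symmetry of second derivatives. Its failure to be skew is again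
`dΘ`, so on the triple, where all the relevant pairings vanish, the two brackets agree, both are
skew, and the Leibniz identity is the Jacobi identity.
-/

section SecondDerivatives

variable {F : Type*} [NormedAddCommGroup F] [NormedSpace ℝ F]

lemma ContDiff.differentiable_fderiv {f : E → F} (hf : ContDiff ℝ 2 f) :
    Differentiable ℝ (fderiv ℝ f) :=
  (hf.fderiv_right (m := 1) le_rfl).differentiable one_ne_zero

lemma ContDiff.fderiv_fderiv_comm {f : E → F} (hf : ContDiff ℝ 2 f) (x u v : E) :
    fderiv ℝ (fderiv ℝ f) x u v = fderiv ℝ (fderiv ℝ f) x v u :=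
  hf.contDiffAt.isSymmSndFDerivAt (by simp) u v

end SecondDerivatives

/-- `ι_Y dα`, for the exterior derivative `dα(x)(u,v) = Dα(x) u v − Dα(x) v u`. -/
noncomputable def interiorExtDeriv (Y : E → E) (α : E → E →L[ℝ] ℝ) : E → E →L[ℝ] ℝ :=
  fun x => fderiv ℝ α x (Y x) - (fderiv ℝ α x).flip (Y x)

section CartanCalculus

variable {X Y Z : E → E} {α β γ : E → E →L[ℝ] ℝ}

lemma lieDeriv_apply (x v : E) :
    lieDeriv X β x v = fderiv ℝ β x (X x) v + β x (fderiv ℝ X x v) := rfl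

lemma interiorExtDeriv_apply (x v : E) :
    interiorExtDeriv Y α x v = fderiv ℝ α x (Y x) v - fderiv ℝ α x v (Y x) := rfl

lemma lieDeriv_eq_interiorExtDeriv_add_fderiv {x : E} (hY : DifferentiableAt ℝ Y x)
    (hα : DifferentiableAt ℝ α x) :
    lieDeriv Y α x = interiorExtDeriv Y α x + fderiv ℝ (fun y => α y (Y y)) x := by
  rw [fderiv_clm_apply hα hY]
  ext v
  simp only [lieDeriv, interiorExtDeriv, add_apply, sub_apply, ContinuousLinearMap.comp_apply,
    ContinuousLinearMap.flip_apply]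
  abel

lemma interiorExtDeriv_eq_lieDeriv_sub_fderiv (hY : Differentiable ℝ Y)
    (hα : Differentiable ℝ α) :
    interiorExtDeriv Y α = lieDeriv Y α - fun x => fderiv ℝ (fun y => α y (Y y)) x := by
  funext x
  rw [Pi.sub_apply, lieDeriv_eq_interiorExtDeriv_add_fderiv (hY x) (hα x), add_sub_cancel_right]

lemma ContDiff.lieDeriv {m n : WithTop ℕ∞} (hX : ContDiff ℝ n X) (hβ : ContDiff ℝ n β)
    (hmn : m + 1 ≤ n) : ContDiff ℝ m (lieDeriv X β) :=
  ((hβ.fderiv_right hmn).clm_apply (hX.of_le (le_self_add.trans hmn))).add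
    ((hβ.of_le (le_self_add.trans hmn)).clm_comp (hX.fderiv_right hmn))

lemma ContDiff.interiorExtDeriv {m n : WithTop ℕ∞} (hY : ContDiff ℝ n Y) (hα : ContDiff ℝ n α)
    (hmn : m + 1 ≤ n) : ContDiff ℝ m (interiorExtDeriv Y α) := by
  have hn : n ≠ 0 := by rintro rfl; simp at hmn
  rw [interiorExtDeriv_eq_lieDeriv_sub_fderiv (hY.differentiable hn) (hα.differentiable hn)]
  exact (hY.lieDeriv hα hmn).sub ((hα.clm_apply hY).fderiv_right hmn)

lemma differentiable_lieDeriv (hX : ContDiff ℝ 2 X) (hβ : ContDiff ℝ 2 β) :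
    Differentiable ℝ (lieDeriv X β) :=
  (hX.lieDeriv hβ (by norm_num)).differentiable one_ne_zero

lemma differentiable_interiorExtDeriv (hY : ContDiff ℝ 2 Y) (hα : ContDiff ℝ 2 α) :
    Differentiable ℝ (interiorExtDeriv Y α) :=
  (hY.interiorExtDeriv hα (by norm_num)).differentiable one_ne_zero

lemma lieDeriv_sub (hα : Differentiable ℝ α) (hβ : Differentiable ℝ β) :
    lieDeriv X (α - β) = lieDeriv X α - lieDeriv X β := by
  funext x
  simp only [lieDeriv, Pi.sub_apply, fderiv_sub (hα x) (hβ x), sub_apply,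
    ContinuousLinearMap.sub_comp]
  abel

lemma interiorExtDeriv_sub (hα : Differentiable ℝ α) (hβ : Differentiable ℝ β) :
    interiorExtDeriv Y (α - β) = interiorExtDeriv Y α - interiorExtDeriv Y β := by
  funext x
  ext v
  simp only [interiorExtDeriv, Pi.sub_apply, fderiv_sub (hα x) (hβ x), sub_apply,
    ContinuousLinearMap.flip_apply]
  abel

lemma interiorExtDeriv_fderiv {g : E → ℝ} (hg : ContDiff ℝ 2 g) :
    interiorExtDeriv Y (fderiv ℝ g) = 0 := by
  funext x
  ext v
  simp only [interiorExtDeriv, sub_apply, ContinuousLinearMap.flip_apply,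
    hg.fderiv_fderiv_comm x (Y x) v, sub_self, Pi.zero_apply, zero_apply]

lemma fderiv_vecBracket_apply (hX : ContDiff ℝ 2 X) (hY : ContDiff ℝ 2 Y) (x u : E) :
    fderiv ℝ (vecBracket X Y) x u =
      fderiv ℝ (fderiv ℝ Y) x u (X x) + fderiv ℝ Y x (fderiv ℝ X x u)
        - fderiv ℝ (fderiv ℝ X) x u (Y x) - fderiv ℝ X x (fderiv ℝ Y x u) := by
  have dX := hX.differentiable two_ne_zero x
  have dY := hY.differentiable two_ne_zero x
  have dX' := hX.differentiable_fderiv x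
  have dY' := hY.differentiable_fderiv x
  unfold vecBracket
  rw [fderiv_fun_sub (dY'.clm_apply dX) (dX'.clm_apply dY),
    fderiv_clm_apply dY' dX, fderiv_clm_apply dX' dY]
  simp only [sub_apply, add_apply, ContinuousLinearMap.comp_apply,
    ContinuousLinearMap.flip_apply]
  abel

lemma fderiv_lieDeriv_apply (hX : ContDiff ℝ 2 X) (hβ : ContDiff ℝ 2 β) (x u v : E) :
    fderiv ℝ (lieDeriv X β) x u v =
      fderiv ℝ (fderiv ℝ β) x u (X x) v + fderiv ℝ β x (fderiv ℝ X x u) v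
        + fderiv ℝ β x u (fderiv ℝ X x v) + β x (fderiv ℝ (fderiv ℝ X) x u v) := by
  have dX := hX.differentiable two_ne_zero x
  have dβ := hβ.differentiable two_ne_zero x
  have dX' := hX.differentiable_fderiv x
  have dβ' := hβ.differentiable_fderiv x
  unfold lieDeriv
  rw [fderiv_fun_add (dβ'.clm_apply dX) (dβ.clm_comp dX'),
    fderiv_clm_apply dβ' dX, fderiv_clm_comp dβ dX']
  simp only [add_apply, ContinuousLinearMap.comp_apply,
    ContinuousLinearMap.flip_apply, ContinuousLinearMap.compL_apply]
  abel

lemma fderiv_interiorExtDeriv_apply (hY : ContDiff ℝ 2 Y) (hα : ContDiff ℝ 2 α) (x u v : E) :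
    fderiv ℝ (interiorExtDeriv Y α) x u v =
      fderiv ℝ (fderiv ℝ α) x u (Y x) v + fderiv ℝ α x (fderiv ℝ Y x u) v
        - fderiv ℝ (fderiv ℝ α) x u v (Y x) - fderiv ℝ α x v (fderiv ℝ Y x u) := by
  have dY := hY.differentiable two_ne_zero x
  have dα' := hα.differentiable_fderiv x
  -- `flip` is differentiated as post-composition with evaluation at `Y y`; naming `g` avoids a
  -- unification failure between two normed-group instances on `(E →L[ℝ] ℝ) →L[ℝ] ℝ`.
  have hY' : HasFDerivAt (fun y => ContinuousLinearMap.apply ℝ ℝ (Y y))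
      ((ContinuousLinearMap.apply ℝ ℝ : E →L[ℝ] (E →L[ℝ] ℝ) →L[ℝ] ℝ).comp (fderiv ℝ Y x)) x :=
    HasFDerivAt.comp x (g := ⇑(ContinuousLinearMap.apply ℝ ℝ : E →L[ℝ] (E →L[ℝ] ℝ) →L[ℝ] ℝ))
      (ContinuousLinearMap.hasFDerivAt _) dY.hasFDerivAt
  have h : interiorExtDeriv Y α = (fun y => fderiv ℝ α y (Y y))
      - fun y => (ContinuousLinearMap.apply ℝ ℝ (Y y)).comp (fderiv ℝ α y) := rfl
  rw [h, fderiv_sub (dα'.clm_apply dY) (hY'.differentiableAt.clm_comp dα'),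
    fderiv_clm_apply dα' dY, fderiv_clm_comp hY'.differentiableAt dα', hY'.fderiv]
  simp only [sub_apply, add_apply, ContinuousLinearMap.comp_apply,
    ContinuousLinearMap.flip_apply, ContinuousLinearMap.compL_apply,
    ContinuousLinearMap.apply_apply]
  abel

lemma lieDeriv_vecBracket (hX : ContDiff ℝ 2 X) (hY : ContDiff ℝ 2 Y) (hγ : ContDiff ℝ 2 γ) :
    lieDeriv (vecBracket X Y) γ = lieDeriv X (lieDeriv Y γ) - lieDeriv Y (lieDeriv X γ) := by
  funext x
  ext v
  simp only [Pi.sub_apply, sub_apply, lieDeriv_apply, fderiv_lieDeriv_apply hX hγ,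
    fderiv_lieDeriv_apply hY hγ, fderiv_vecBracket_apply hX hY, vecBracket, map_sub, map_add]
  rw [hγ.fderiv_fderiv_comm x (X x) (Y x), hY.fderiv_fderiv_comm x v (X x),
    hX.fderiv_fderiv_comm x v (Y x)]
  abel

lemma interiorExtDeriv_vecBracket (hX : ContDiff ℝ 2 X) (hZ : ContDiff ℝ 2 Z)
    (hβ : ContDiff ℝ 2 β) :
    interiorExtDeriv (vecBracket X Z) β =
      lieDeriv X (interiorExtDeriv Z β) - interiorExtDeriv Z (lieDeriv X β) := by
  funext x
  ext v
  simp only [Pi.sub_apply, sub_apply, lieDeriv_apply, interiorExtDeriv_apply,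
    fderiv_lieDeriv_apply hX hβ, fderiv_interiorExtDeriv_apply hZ hβ, vecBracket, map_sub]
  rw [hβ.fderiv_fderiv_comm x (X x) (Z x), hβ.fderiv_fderiv_comm x (X x) v,
    hX.fderiv_fderiv_comm x (Z x) v]
  abel

/-- `L_Y α − ι_Y dα` is exact, so `ι_Z d` kills it. -/
lemma interiorExtDeriv_interiorExtDeriv (hY : ContDiff ℝ 2 Y) (hα : ContDiff ℝ 2 α) :
    interiorExtDeriv Z (interiorExtDeriv Y α) = interiorExtDeriv Z (lieDeriv Y α) := by
  have hg : ContDiff ℝ 2 (fun y => α y (Y y)) := hα.clm_apply hY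
  rw [interiorExtDeriv_eq_lieDeriv_sub_fderiv (hY.differentiable two_ne_zero)
      (hα.differentiable two_ne_zero),
    interiorExtDeriv_sub (differentiable_lieDeriv hY hα) hg.differentiable_fderiv,
    interiorExtDeriv_fderiv hg, sub_zero]

lemma lieDeriv_sub_interiorExtDeriv_leibniz (hX : ContDiff ℝ 2 X) (hα : ContDiff ℝ 2 α)
    (hY : ContDiff ℝ 2 Y) (hβ : ContDiff ℝ 2 β) (hZ : ContDiff ℝ 2 Z) (hγ : ContDiff ℝ 2 γ) :
    lieDeriv X (lieDeriv Y γ - interiorExtDeriv Z β) - interiorExtDeriv (vecBracket Y Z) α =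
      (lieDeriv (vecBracket X Y) γ - interiorExtDeriv Z (lieDeriv X β - interiorExtDeriv Y α))
        + (lieDeriv Y (lieDeriv X γ - interiorExtDeriv Z α)
          - interiorExtDeriv (vecBracket X Z) β) := by
  rw [lieDeriv_sub (differentiable_lieDeriv hY hγ) (differentiable_interiorExtDeriv hZ hβ),
    lieDeriv_sub (differentiable_lieDeriv hX hγ) (differentiable_interiorExtDeriv hZ hα),
    interiorExtDeriv_sub (differentiable_lieDeriv hX hβ) (differentiable_interiorExtDeriv hY hα),
    interiorExtDeriv_interiorExtDeriv hY hα, lieDeriv_vecBracket hX hY hγ,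
    interiorExtDeriv_vecBracket hX hZ hβ, interiorExtDeriv_vecBracket hY hZ hα]
  abel

end CartanCalculus

/-- The Dorfman bracket, written as `([X₁,X₂], L_{X₁}α₂ − L_{X₂}α₁ + d(α₁(X₂)))` so that it
differs from `courant` only in the exact term; `dorfman_snd` turns the form part into
`L_{X₁}α₂ − ι_{X₂}dα₁`. -/
noncomputable def dorfman (e₁ e₂ : (E → E) × (E → E →L[ℝ] ℝ)) : (E → E) × (E → E →L[ℝ] ℝ) :=
  (vecBracket e₁.1 e₂.1,
    fun x => lieDeriv e₁.1 e₂.2 x - lieDeriv e₂.1 e₁.2 x + fderiv ℝ (fun y => e₁.2 y (e₂.1 y)) x)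

section Dorfman

variable {e₁ e₂ : (E → E) × (E → E →L[ℝ] ℝ)}

@[simp] lemma dorfman_fst : (dorfman e₁ e₂).1 = vecBracket e₁.1 e₂.1 := rfl

lemma courant_eq_dorfman (h : ∀ x, pairingTheta e₁ e₂ x = 0) :
    courant e₁ e₂ = dorfman e₁ e₂ := by
  have h2 : (fun y => e₁.2 y (e₂.1 y) - e₂.2 y (e₁.1 y)) = (2 : ℝ) • fun y => e₁.2 y (e₂.1 y) := by
    funext y
    have hy := h y
    simp only [pairingTheta] at hy
    simp only [Pi.smul_apply, smul_eq_mul]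
    linarith
  refine Prod.ext rfl (funext fun x => ?_)
  simp only [courant, dorfman, h2, fderiv_const_smul_field, Pi.smul_apply, smul_smul]
  norm_num

lemma dorfman_swap (h : ∀ x, pairingTheta e₁ e₂ x = 0) : dorfman e₁ e₂ = -dorfman e₂ e₁ := by
  have hneg : (fun y => e₁.2 y (e₂.1 y)) = fun y => -e₂.2 y (e₁.1 y) :=
    funext fun y => eq_neg_of_add_eq_zero_left (h y)
  refine Prod.ext (funext fun x => ?_) (funext fun x => ?_)
  · simp only [dorfman_fst, vecBracket, Prod.fst_neg, Pi.neg_apply, neg_sub]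
  · simp only [dorfman, Prod.snd_neg, Pi.neg_apply, hneg, fderiv_fun_neg]
    abel

lemma dorfman_neg_right : dorfman e₁ (-e₂) = -dorfman e₁ e₂ := by
  refine Prod.ext (funext fun x => ?_) (funext fun x => ?_)
  · simp only [dorfman_fst, vecBracket, Prod.fst_neg, fderiv_neg, Pi.neg_apply, neg_apply,
      map_neg]
    abel
  · simp only [dorfman, lieDeriv, Prod.fst_neg, Prod.snd_neg, fderiv_neg, fderiv_fun_neg,
      neg_apply, Pi.neg_apply, map_neg, ContinuousLinearMap.neg_comp,
      ContinuousLinearMap.comp_neg]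
    abel

lemma dorfman_snd (h₁ : Differentiable ℝ e₁.2) (h₂ : Differentiable ℝ e₂.1) :
    (dorfman e₁ e₂).2 = lieDeriv e₁.1 e₂.2 - interiorExtDeriv e₂.1 e₁.2 := by
  funext x
  simp only [dorfman, Pi.sub_apply, lieDeriv_eq_interiorExtDeriv_add_fderiv (h₂ x) (h₁ x)]
  abel

end Dorfman

theorem dorfman_leibniz {a b c : (E → E) × (E → E →L[ℝ] ℝ)}
    (ha : ContDiff ℝ 2 a.1 ∧ ContDiff ℝ 2 a.2) (hb : ContDiff ℝ 2 b.1 ∧ ContDiff ℝ 2 b.2)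
    (hc : ContDiff ℝ 2 c.1 ∧ ContDiff ℝ 2 c.2) :
    dorfman a (dorfman b c) = dorfman (dorfman a b) c + dorfman b (dorfman a c) := by
  obtain ⟨X, α⟩ := a
  obtain ⟨Y, β⟩ := b
  obtain ⟨Z, γ⟩ := c
  obtain ⟨hX, hα⟩ := ha
  obtain ⟨hY, hβ⟩ := hb
  obtain ⟨hZ, hγ⟩ := hc
  dsimp only at hX hα hY hβ hZ hγ
  refine Prod.ext (funext fun x => VectorField.leibniz_identity_lieBracket (by simp)
    hX.contDiffAt hY.contDiffAt hZ.contDiffAt) ?_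
  have hvec {f g : E → E} (hf : ContDiff ℝ 2 f) (hg : ContDiff ℝ 2 g) :
      Differentiable ℝ (vecBracket f g) :=
    (hf.lieBracket_vectorField hg (m := 1) (by norm_num)).differentiable one_ne_zero
  have dZ := hZ.differentiable two_ne_zero
  have dα := hα.differentiable two_ne_zero
  have dβ := hβ.differentiable two_ne_zero
  have hab : (dorfman (X, α) (Y, β)).2 = lieDeriv X β - interiorExtDeriv Y α :=
    dorfman_snd dα (hY.differentiable two_ne_zero)
  have hac : (dorfman (X, α) (Z, γ)).2 = lieDeriv X γ - interiorExtDeriv Z α := dorfman_snd dα dZ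
  have hbc : (dorfman (Y, β) (Z, γ)).2 = lieDeriv Y γ - interiorExtDeriv Z β := dorfman_snd dβ dZ
  have dab : Differentiable ℝ (dorfman (X, α) (Y, β)).2 :=
    hab ▸ (differentiable_lieDeriv hX hβ).sub (differentiable_interiorExtDeriv hY hα)
  rw [Prod.snd_add, dorfman_snd (e₂ := dorfman (Y, β) (Z, γ)) dα (hvec hY hZ),
    dorfman_snd dab dZ, dorfman_snd (e₂ := dorfman (X, α) (Z, γ)) dβ (hvec hX hZ)]
  simp only [dorfman_fst, hab, hac, hbc]
  exact lieDeriv_sub_interiorExtDeriv_leibniz hX hα hY hβ hZ hγ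

theorem courant_jacobi_on_dirac_sections (e : Fin 3 → (E → E) × (E → (E →L[ℝ] ℝ)))
    (hsm : ∀ i, ContDiff ℝ (⊤ : ℕ∞) (e i).1 ∧ ContDiff ℝ (⊤ : ℕ∞) (e i).2)
    (hiso : ∀ i j, ∀ x : E, pairingTheta (e i) (e j) x = 0)
    (hbr : ∀ i j k, ∀ x : E, pairingTheta (courant (e i) (e j)) (e k) x = 0) :
    courant (courant (e 0) (e 1)) (e 2) + courant (courant (e 1) (e 2)) (e 0) +
      courant (courant (e 2) (e 0)) (e 1) = 0 := by
  have h2 : (2 : WithTop ℕ∞) ≤ (⊤ : ℕ∞) := WithTop.coe_le_coe.2 le_top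
  have hC2 (i : Fin 3) : ContDiff ℝ 2 (e i).1 ∧ ContDiff ℝ 2 (e i).2 :=
    ⟨(hsm i).1.of_le h2, (hsm i).2.of_le h2⟩
  have h₁ (i j : Fin 3) : courant (e i) (e j) = dorfman (e i) (e j) :=
    courant_eq_dorfman (hiso i j)
  have hbr' (i j k : Fin 3) (x : E) : pairingTheta (dorfman (e i) (e j)) (e k) x = 0 :=
    h₁ i j ▸ hbr i j k x
  have h₂ (i j k : Fin 3) :
      courant (dorfman (e i) (e j)) (e k) = dorfman (dorfman (e i) (e j)) (e k) :=
    courant_eq_dorfman (hbr' i j k)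
  simp only [h₁, h₂]
  rw [dorfman_swap (hbr' 1 2 0), dorfman_swap (hbr' 2 0 1), dorfman_swap (hiso 2 0),
    dorfman_neg_right, dorfman_leibniz (hC2 0) (hC2 1) (hC2 2)]
  abel
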